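/- Let P, m ≥ 1, let F : ℝ^P → ℝ be infinitely differentiable, and let c ∈ ℝ. Define R^{(0)}(θ) = F(θ) − c and recursively R^{(u+1)}(θ) = ⟨∇F(θ), ∇R^{(u)}(θ)⟩, so that K(θ) := R^{(1)}(θ) = ‖∇F(θ)‖². For Θ = (θ_1,…,θ_m) ∈ (ℝ^P)^m write R_j(Θ) = R^{(0)}(θ_j) and K_j(Θ) = K(θ_j), and let (Γ_j g)(Θ) = ⟨∇F(θ_j), ∇_{θ_j} g(Θ)⟩. Fix r ≥ 1 and indices j_0,…,j_r ∈ {1,…,m}, and define ξ_{j_0…j_r} = [M_{R_{j_r}} ∘ (Σ_{j=1}^m Γ_j)] ∘ ⋯ ∘ [M_{R_{j_1}} ∘ (Σ_{j=1}^m Γ_j)] (K_{j_0}), where M_g denotes pointwise multiplication by g and the factors are applied in order u = 1,…,r. Then ξ_{j_0…j_r} is a linear combination with nonnegative integer coefficients of the functions Θ ↦ Π_{v=0}^r R^{(u_v)}(θ_{j_v}), where the exponent tuples (u_0,…,u_r) range over the set S^r = { u ∈ ℕ^{r+1} : 2 ≤ u_0 ≤ r+1, 0 ≤ u_v ≤ r−v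 for 1 ≤ v ≤ r, and Σ_{v=0}^r u_v = r+1 }. In particular every monomial occurring in ξ_{j_0…j_r} has u_0 ≥ 2, u_r = 0, and total order Σ_v u_v = r+1. -/

import Mathlib

open scoped RealInnerProductSpace

noncomputable section

/-- Iterated residual derivatives: `R⁽⁰⁾(θ) = F(θ) − c`,
`R⁽ᵘ⁺¹⁾(θ) = ⟪∇F(θ), ∇R⁽ᵘ⁾(θ)⟫`; in particular `K = R⁽¹⁾ = ‖∇F‖²`. -/
def Rit {P : ℕ} (F : EuclideanSpace ℝ (Fin P) → ℝ) (c : ℝ) :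
    ℕ → EuclideanSpace ℝ (Fin P) → ℝ
  | 0 => fun θ => F θ - c
  | u + 1 => fun θ => ⟪gradient F θ, gradient (Rit F c u) θ⟫

/-- `(Γ_j g)(Θ) = ⟪∇F(θ_j), ∇_{θ_j} g(Θ)⟫`: directional derivative of `g` in block `j`
along the gradient of `F` at `θ_j`. -/
def Gamma {P m : ℕ} (F : EuclideanSpace ℝ (Fin P) → ℝ) (j : Fin m)
    (g : (Fin m → EuclideanSpace ℝ (Fin P)) → ℝ) :
    (Fin m → EuclideanSpace ℝ (Fin P)) → ℝ :=
  fun Θ => ⟪gradient F (Θ j),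
    gradient (fun θ : EuclideanSpace ℝ (Fin P) => g (Function.update Θ j θ)) (Θ j)⟫

/-- `ξ_{j_0…j_r} = [M_{R_{j_r}} ∘ ∑_j Γ_j] ∘ ⋯ ∘ [M_{R_{j_1}} ∘ ∑_j Γ_j] (K_{j_0})`,
where `M_g` is pointwise multiplication by `g`, applied in order `u = 1, …, r`. -/
def xi {P m : ℕ} (F : EuclideanSpace ℝ (Fin P) → ℝ) (c : ℝ) (js : ℕ → Fin m) :
    ℕ → (Fin m → EuclideanSpace ℝ (Fin P)) → ℝ
  | 0 => fun Θ => Rit F c 1 (Θ (js 0))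
  | u + 1 => fun Θ =>
      Rit F c 0 (Θ (js (u + 1))) * (∑ j : Fin m, Gamma F j (xi F c js u) Θ)

namespace XiAux

variable {P m : ℕ}

lemma contDiff_gradient {f : EuclideanSpace ℝ (Fin P) → ℝ} (hf : ContDiff ℝ (⊤ : ℕ∞) f) :
    ContDiff ℝ (⊤ : ℕ∞) (gradient f) := by
  have h : gradient f = fun θ =>
      (InnerProductSpace.toDual ℝ (EuclideanSpace ℝ (Fin P))).symm (fderiv ℝ f θ) := rfl
  rw [h]
  exact ((InnerProductSpace.toDual ℝ (EuclideanSpace ℝ (Fin P))).symm.toContinuousLinearEquiv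
    : StrongDual ℝ (EuclideanSpace ℝ (Fin P)) ≃L[ℝ] EuclideanSpace ℝ (Fin P))
    |>.toContinuousLinearMap.contDiff.comp (hf.fderiv_right (by simp))

lemma Rit_contDiff {F : EuclideanSpace ℝ (Fin P) → ℝ} (hF : ContDiff ℝ (⊤ : ℕ∞) F) (c : ℝ) :
    ∀ u, ContDiff ℝ (⊤ : ℕ∞) (Rit F c u)
  | 0 => hF.sub contDiff_const
  | (u+1) => by
      show ContDiff ℝ (⊤ : ℕ∞) fun θ => ⟪gradient F θ, gradient (Rit F c u) θ⟫
      exact (contDiff_gradient hF).inner ℝ (contDiff_gradient (Rit_contDiff hF c u))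

lemma inner_gradient_eq (f : EuclideanSpace ℝ (Fin P) → ℝ) (x y : EuclideanSpace ℝ (Fin P)) :
    ⟪gradient f x, y⟫ = fderiv ℝ f x y :=
  InnerProductSpace.toDual_symm_apply

lemma Rit_succ_eq (F : EuclideanSpace ℝ (Fin P) → ℝ) (c : ℝ) (u : ℕ)
    (θ : EuclideanSpace ℝ (Fin P)) :
    Rit F c (u + 1) θ = fderiv ℝ (Rit F c u) θ (gradient F θ) := by
  show ⟪gradient F θ, gradient (Rit F c u) θ⟫ = _
  rw [real_inner_comm, inner_gradient_eq]

lemma Gamma_eq (F : EuclideanSpace ℝ (Fin P) → ℝ) (j : Fin m)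
    (g : (Fin m → EuclideanSpace ℝ (Fin P)) → ℝ) (Θ : Fin m → EuclideanSpace ℝ (Fin P)) :
    Gamma F j g Θ =
      fderiv ℝ (fun θ => g (Function.update Θ j θ)) (Θ j) (gradient F (Θ j)) := by
  rw [Gamma, real_inner_comm, inner_gradient_eq]

/-- The monomial `Θ ↦ ∏ v, R⁽ᵘᵛ⁾(θ_{j_v})`. -/
def Mon (F : EuclideanSpace ℝ (Fin P) → ℝ) (c : ℝ) (js : ℕ → Fin m) (r : ℕ)
    (u : Fin (r + 1) → ℕ) (Θ : Fin m → EuclideanSpace ℝ (Fin P)) : ℝ :=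
  ∏ v : Fin (r + 1), Rit F c (u v) (Θ (js (v : ℕ)))

variable {F : EuclideanSpace ℝ (Fin P) → ℝ} {c : ℝ} {js : ℕ → Fin m}

lemma hasFDerivAt_monSection (hF : ContDiff ℝ (⊤ : ℕ∞) F) {r : ℕ} (u : Fin (r + 1) → ℕ)
    (Θ : Fin m → EuclideanSpace ℝ (Fin P)) (j : Fin m) :
    HasFDerivAt (fun θ => Mon F c js r u (Function.update Θ j θ))
      (∑ v : Fin (r + 1), (∏ w ∈ Finset.univ.erase v, Rit F c (u w) (Θ (js (w : ℕ)))) •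
        (if js (v : ℕ) = j then fderiv ℝ (Rit F c (u v)) (Θ j) else 0)) (Θ j) := by
  have key : ∀ v : Fin (r + 1),
      HasFDerivAt (fun θ => Rit F c (u v) (Function.update Θ j θ (js (v : ℕ))))
        (if js (v : ℕ) = j then fderiv ℝ (Rit F c (u v)) (Θ j) else 0) (Θ j) := by
    intro v
    by_cases h : js (v : ℕ) = j
    · rw [if_pos h]
      have heq : (fun θ => Rit F c (u v) (Function.update Θ j θ (js (v : ℕ))))
          = fun θ => Rit F c (u v) θ := by
        funext θ; rw [h, Function.update_self]
      rw [heq]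
      exact ((Rit_contDiff hF c (u v)).differentiable (by simp) (Θ j)).hasFDerivAt
    · rw [if_neg h]
      have heq : (fun θ => Rit F c (u v) (Function.update Θ j θ (js (v : ℕ))))
          = fun _ => Rit F c (u v) (Θ (js (v : ℕ))) := by
        funext θ; rw [Function.update_of_ne h]
      rw [heq]
      exact hasFDerivAt_const _ _
  have h2 := HasFDerivAt.finset_prod (u := Finset.univ)
    (g := fun v θ => Rit F c (u v) (Function.update Θ j θ (js (v : ℕ))))
    (g' := fun v => if js (v : ℕ) = j then fderiv ℝ (Rit F c (u v)) (Θ j) else 0)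
    (x := Θ j) (fun v _ => key v)
  refine h2.congr_fderiv ?_
  refine (Finset.sum_congr rfl fun v _ => ?_).symm
  simp only [Function.update_eq_self]

lemma Gamma_Mon (hF : ContDiff ℝ (⊤ : ℕ∞) F) {r : ℕ} (u : Fin (r + 1) → ℕ) (j : Fin m)
    (Θ : Fin m → EuclideanSpace ℝ (Fin P)) :
    Gamma F j (Mon F c js r u) Θ =
      ∑ v : Fin (r + 1), if js (v : ℕ) = j then
        (∏ w ∈ Finset.univ.erase v, Rit F c (u w) (Θ (js (w : ℕ)))) *
          Rit F c (u v + 1) (Θ (js (v : ℕ)))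
      else 0 := by
  rw [Gamma_eq, (hasFDerivAt_monSection hF u Θ j).fderiv]
  rw [ContinuousLinearMap.sum_apply]
  refine Finset.sum_congr rfl fun v _ => ?_
  rw [ContinuousLinearMap.smul_apply, smul_eq_mul]
  by_cases h : js (v : ℕ) = j
  · rw [if_pos h, if_pos h, ← Rit_succ_eq, h]
  · rw [if_neg h, if_neg h, ContinuousLinearMap.zero_apply, mul_zero]

lemma sum_Gamma_Mon (hF : ContDiff ℝ (⊤ : ℕ∞) F) {r : ℕ} (u : Fin (r + 1) → ℕ)
    (Θ : Fin m → EuclideanSpace ℝ (Fin P)) :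
    ∑ j : Fin m, Gamma F j (Mon F c js r u) Θ =
      ∑ v : Fin (r + 1), Mon F c js r (Function.update u v (u v + 1)) Θ := by
  have h1 : ∀ v : Fin (r + 1),
      Mon F c js r (Function.update u v (u v + 1)) Θ =
        (∏ w ∈ Finset.univ.erase v, Rit F c (u w) (Θ (js (w : ℕ)))) *
          Rit F c (u v + 1) (Θ (js (v : ℕ))) := by
    intro v
    rw [Mon, ← Finset.mul_prod_erase _ _ (Finset.mem_univ v), Function.update_self, mul_comm]
    congr 1
    refine Finset.prod_congr rfl fun w hw => ?_
    rw [Function.update_of_ne (Finset.ne_of_mem_erase hw)]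
  calc ∑ j : Fin m, Gamma F j (Mon F c js r u) Θ
      = ∑ j : Fin m, ∑ v : Fin (r + 1), if js (v : ℕ) = j then
          (∏ w ∈ Finset.univ.erase v, Rit F c (u w) (Θ (js (w : ℕ)))) *
            Rit F c (u v + 1) (Θ (js (v : ℕ))) else 0 :=
        Finset.sum_congr rfl fun j _ => Gamma_Mon hF u j Θ
    _ = ∑ v : Fin (r + 1), ∑ j : Fin m, if js (v : ℕ) = j then
          (∏ w ∈ Finset.univ.erase v, Rit F c (u w) (Θ (js (w : ℕ)))) *
            Rit F c (u v + 1) (Θ (js (v : ℕ))) else 0 := Finset.sum_comm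
    _ = ∑ v : Fin (r + 1), Mon F c js r (Function.update u v (u v + 1)) Θ := by
        refine Finset.sum_congr rfl fun v _ => ?_
        rw [Finset.sum_ite_eq, if_pos (Finset.mem_univ _), h1 v]

lemma hasFDerivAt_multiset_sum {α : Type*} {G : Type*} [NormedAddCommGroup G]
    [NormedSpace ℝ G] (l : Multiset α) (f : α → G → ℝ) (D : α → G →L[ℝ] ℝ) (x : G)
    (h : ∀ a ∈ l, HasFDerivAt (f a) (D a) x) :
    HasFDerivAt (fun y => (l.map (fun a => f a y)).sum) ((l.map D).sum) x := by
  induction l using Multiset.induction_on with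
  | empty => simpa using hasFDerivAt_const (0 : ℝ) x
  | cons a l ih =>
      simp only [Multiset.map_cons, Multiset.sum_cons]
      exact (h a (Multiset.mem_cons_self a l)).add
        (ih fun b hb => h b (Multiset.mem_cons_of_mem hb))

lemma multiset_sum_apply {α : Type*} {G : Type*} [NormedAddCommGroup G]
    [NormedSpace ℝ G] (l : Multiset α) (D : α → G →L[ℝ] ℝ) (y : G) :
    ((l.map D).sum) y = (l.map (fun a => D a y)).sum := by
  induction l using Multiset.induction_on with
  | empty => simp
  | cons a l ih => simp [ih]

lemma Gamma_multiset_sum (hF : ContDiff ℝ (⊤ : ℕ∞) F) {r : ℕ} (j : Fin m)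
    (Θ : Fin m → EuclideanSpace ℝ (Fin P)) (l : Multiset (Fin (r + 1) → ℕ)) :
    Gamma F j (fun Θ' => (l.map (fun u => Mon F c js r u Θ')).sum) Θ
      = (l.map (fun u => Gamma F j (Mon F c js r u) Θ)).sum := by
  have h := hasFDerivAt_multiset_sum l
    (fun u θ => Mon F c js r u (Function.update Θ j θ))
    (fun u => ∑ v : Fin (r + 1),
      (∏ w ∈ Finset.univ.erase v, Rit F c (u w) (Θ (js (w : ℕ)))) •
        (if js (v : ℕ) = j then fderiv ℝ (Rit F c (u v)) (Θ j) else 0))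
    (Θ j) (fun u _ => hasFDerivAt_monSection hF u Θ j)
  simp only [Gamma_eq]
  rw [h.fderiv, multiset_sum_apply]
  refine congrArg Multiset.sum (Multiset.map_congr rfl fun u _ => ?_)
  rw [(hasFDerivAt_monSection hF u Θ j).fderiv]

lemma multiset_sum_swap {α : Type*} (l : Multiset α) (f : Fin m → α → ℝ) :
    ∑ j : Fin m, (l.map (f j)).sum = (l.map (fun a => ∑ j : Fin m, f j a)).sum := by
  induction l using Multiset.induction_on with
  | empty => simp
  | cons a l ih => simp [Finset.sum_add_distrib, ih]

lemma Mon_snoc (r : ℕ) (u' : Fin (r + 1) → ℕ) (Θ : Fin m → EuclideanSpace ℝ (Fin P)) :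
    Mon F c js (r + 1) (Fin.snoc u' 0) Θ =
      Rit F c 0 (Θ (js (r + 1))) * Mon F c js r u' Θ := by
  rw [Mon, Mon, Fin.prod_univ_castSucc]
  simp only [Fin.snoc_castSucc, Fin.snoc_last, Fin.coe_castSucc, Fin.val_last]
  rw [mul_comm]

/-- The multiset of exponent tuples after one more application of
`M_{R_{j_{r+1}}} ∘ ∑_j Γ_j`. -/
def nextM {r : ℕ} (l : Multiset (Fin (r + 1) → ℕ)) : Multiset (Fin (r + 2) → ℕ) :=
  l.bind fun u => (Finset.univ.val : Multiset (Fin (r + 1))).map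
    (fun w => Fin.snoc (Function.update u w (u w + 1)) 0)

lemma xi_step (hF : ContDiff ℝ (⊤ : ℕ∞) F) {r : ℕ} (l : Multiset (Fin (r + 1) → ℕ))
    (hl : ∀ Θ, xi F c js r Θ = (l.map (fun u => Mon F c js r u Θ)).sum) :
    ∀ Θ, xi F c js (r + 1) Θ =
      ((nextM l).map (fun u' => Mon F c js (r + 1) u' Θ)).sum := by
  intro Θ
  have hx : xi F c js r = fun Θ' => (l.map (fun u => Mon F c js r u Θ')).sum := funext hl
  show Rit F c 0 (Θ (js (r + 1))) * (∑ j : Fin m, Gamma F j (xi F c js r) Θ) = _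
  rw [hx]
  have h1 : ∑ j : Fin m,
        Gamma F j (fun Θ' => (l.map (fun u => Mon F c js r u Θ')).sum) Θ
      = (l.map (fun u =>
          ∑ v : Fin (r + 1), Mon F c js r (Function.update u v (u v + 1)) Θ)).sum := by
    calc ∑ j : Fin m, Gamma F j (fun Θ' => (l.map (fun u => Mon F c js r u Θ')).sum) Θ
        = ∑ j : Fin m, (l.map (fun u => Gamma F j (Mon F c js r u) Θ)).sum :=
          Finset.sum_congr rfl fun j _ => Gamma_multiset_sum hF j Θ l
      _ = (l.map (fun u => ∑ j : Fin m, Gamma F j (Mon F c js r u) Θ)).sum :=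
          multiset_sum_swap l _
      _ = _ := congrArg Multiset.sum
          (Multiset.map_congr rfl fun u _ => sum_Gamma_Mon hF u Θ)
  rw [h1, ← Multiset.sum_map_mul_left]
  rw [nextM, Multiset.map_bind, Multiset.sum_bind]
  refine congrArg Multiset.sum (Multiset.map_congr rfl fun u _ => ?_)
  rw [Multiset.map_map]
  have h2 : ((Finset.univ.val : Multiset (Fin (r + 1))).map
      ((fun u' => Mon F c js (r + 1) u' Θ) ∘
        (fun w => Fin.snoc (Function.update u w (u w + 1)) 0))).sum
      = ∑ w : Fin (r + 1),
          Mon F c js (r + 1) (Fin.snoc (Function.update u w (u w + 1)) 0) Θ := rfl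
  rw [h2, Finset.mul_sum]
  exact Finset.sum_congr rfl fun w _ => (Mon_snoc r _ Θ).symm

/-- The index set `S^r` of admissible exponent tuples. -/
def Sfull (r : ℕ) (u : Fin (r + 1) → ℕ) : Prop :=
  2 ≤ u 0 ∧ u 0 ≤ r + 1 ∧ (∀ v : Fin (r + 1), 1 ≤ (v : ℕ) → u v ≤ r - (v : ℕ)) ∧
  u (Fin.last r) = 0 ∧ (∑ v : Fin (r + 1), u v) = r + 1

lemma sum_update_add_one {r : ℕ} (u : Fin (r + 1) → ℕ) (w : Fin (r + 1)) :
    (∑ v : Fin (r + 1), Function.update u w (u w + 1) v) = (∑ v : Fin (r + 1), u v) + 1 := by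
  rw [Finset.sum_update_of_mem (Finset.mem_univ w)]
  have h := Finset.add_sum_erase Finset.univ u (Finset.mem_univ w)
  rw [Finset.erase_eq] at h
  omega

lemma Sfull_step {r : ℕ} {u : Fin (r + 1) → ℕ} (h : Sfull r u) (w : Fin (r + 1)) :
    Sfull (r + 1) (Fin.snoc (Function.update u w (u w + 1)) 0) := by
  obtain ⟨h1, h2, h3, -, h5⟩ := h
  have hwle : (w : ℕ) ≤ r := Nat.lt_succ_iff.mp w.isLt
  refine ⟨?_, ?_, ?_, ?_, ?_⟩
  · rw [show (0 : Fin (r + 2)) = Fin.castSucc 0 from rfl, Fin.snoc_castSucc,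
      Function.update_apply]
    rcases eq_or_ne (0 : Fin (r + 1)) w with h0 | h0
    · rw [if_pos h0, ← h0]; omega
    · rw [if_neg h0]; omega
  · rw [show (0 : Fin (r + 2)) = Fin.castSucc 0 from rfl, Fin.snoc_castSucc,
      Function.update_apply]
    rcases eq_or_ne (0 : Fin (r + 1)) w with h0 | h0
    · rw [if_pos h0, ← h0]; omega
    · rw [if_neg h0]; omega
  · intro v
    refine Fin.lastCases ?_ (fun v₀ => ?_) v
    · intro _
      rw [Fin.snoc_last]
      exact Nat.zero_le _
    · intro hv
      have hvlt : (v₀ : ℕ) ≤ r := Nat.lt_succ_iff.mp v₀.isLt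
      simp only [Fin.coe_castSucc] at hv ⊢
      rw [Fin.snoc_castSucc, Function.update_apply]
      have hv3 := h3 v₀ hv
      by_cases hvw : v₀ = w
      · rw [if_pos hvw, ← hvw]; omega
      · rw [if_neg hvw]; omega
  · rw [Fin.snoc_last]
  · rw [Fin.sum_univ_castSucc]
    simp only [Fin.snoc_castSucc, Fin.snoc_last]
    rw [sum_update_add_one, h5]

lemma Sfull_two : Sfull 1 (Fin.snoc (fun _ : Fin 1 => 2) 0) := by
  refine ⟨?_, ?_, ?_, ?_, ?_⟩
  · rw [show (0 : Fin 2) = Fin.castSucc 0 from rfl, Fin.snoc_castSucc]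
  · rw [show (0 : Fin 2) = Fin.castSucc 0 from rfl, Fin.snoc_castSucc]
  · intro v
    refine Fin.lastCases ?_ (fun v₀ => ?_) v
    · intro _
      rw [Fin.snoc_last]
      exact Nat.zero_le _
    · intro hv
      have := v₀.isLt
      simp only [Fin.coe_castSucc] at hv
      omega
  · rw [Fin.snoc_last]
  · rw [Fin.sum_univ_castSucc]
    simp
    rfl

/-- The explicit multiset of exponent tuples for `ξ` at level `r`. -/
def lrec : (r : ℕ) → Multiset (Fin (r + 1) → ℕ)
  | 0 => {fun _ => 1}
  | r + 1 => nextM (lrec r)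

lemma xi_repr (hF : ContDiff ℝ (⊤ : ℕ∞) F) :
    ∀ (r : ℕ) (Θ : Fin m → EuclideanSpace ℝ (Fin P)),
      xi F c js r Θ = ((lrec r).map (fun u => Mon F c js r u Θ)).sum
  | 0, Θ => by
      show Rit F c 1 (Θ (js 0)) = _
      simp [lrec, Mon]
  | (r + 1), Θ => xi_step hF (lrec r) (fun Θ' => xi_repr hF r Θ') Θ

lemma Sfull_lrec : ∀ r, 1 ≤ r → ∀ u' ∈ lrec r, Sfull r u' := by
  intro r
  induction r with
  | zero => omega
  | succ r ih =>
    intro _ u' hu'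
    rw [show lrec (r + 1) = nextM (lrec r) from rfl, nextM] at hu'
    obtain ⟨u, hu, hmem⟩ := Multiset.mem_bind.mp hu'
    obtain ⟨w, -, rfl⟩ := Multiset.mem_map.mp hmem
    rcases Nat.eq_zero_or_pos r with hr0 | hrpos
    · subst hr0
      have hueq : u = fun _ => 1 := by simpa [lrec] using hu
      subst hueq
      have hupd : Function.update (fun _ : Fin 1 => 1) w ((fun _ : Fin 1 => 1) w + 1)
          = fun _ : Fin 1 => 2 := by
        funext v
        rw [Subsingleton.elim v w, Function.update_self]
      rw [hupd]
      exact Sfull_two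
    · exact Sfull_step (ih hrpos u hu) w

end XiAux

/-- `ξ_{j_0…j_r}` is a linear combination with nonnegative integer
coefficients of the monomials `Θ ↦ ∏_{v=0}^r R⁽ᵘᵛ⁾(θ_{j_v})`, with exponent tuples in
`S^r = {u : 2 ≤ u_0 ≤ r+1, u_v ≤ r−v for 1 ≤ v ≤ r, ∑_v u_v = r+1}`; in particular every
occurring monomial has `u_0 ≥ 2`, `u_r = 0`, and total order `∑_v u_v = r+1`. -/
theorem xi_expansion
    (P m : ℕ) (hP : 1 ≤ P) (hm : 1 ≤ m)
    (F : EuclideanSpace ℝ (Fin P) → ℝ) (hF : ContDiff ℝ (⊤ : ℕ∞) F) (c : ℝ)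
    (r : ℕ) (hr : 1 ≤ r) (js : ℕ → Fin m) :
    ∃ (T : Finset (Fin (r + 1) → ℕ)) (a : (Fin (r + 1) → ℕ) → ℕ),
      (∀ u ∈ T,
        2 ≤ u 0 ∧ u 0 ≤ r + 1 ∧
        (∀ v : Fin (r + 1), 1 ≤ (v : ℕ) → u v ≤ r - (v : ℕ)) ∧
        u (Fin.last r) = 0 ∧
        (∑ v : Fin (r + 1), u v) = r + 1) ∧
      ∀ Θ : Fin m → EuclideanSpace ℝ (Fin P),
        xi F c js r Θ =
          ∑ u ∈ T, (a u : ℝ) * ∏ v : Fin (r + 1), Rit F c (u v) (Θ (js (v : ℕ))) := by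
  classical
  refine ⟨(XiAux.lrec r).toFinset, fun u => (XiAux.lrec r).count u, ?_, ?_⟩
  · intro u hu
    exact XiAux.Sfull_lrec r hr u (Multiset.mem_toFinset.mp hu)
  · intro Θ
    rw [XiAux.xi_repr hF r Θ, Finset.sum_multiset_map_count]
    refine Finset.sum_congr rfl fun u _ => ?_
    rw [nsmul_eq_mul]
    rfl
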